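/- arXiv:1206.3206 — 2 statements merged into one kernel-verified Lean document; each statement's English description precedes it below -/
import Mathlib

section
/- Let G be an n-vertex graph with independence number α = n−k where k ≥ C_x·δ for some δ ≥ 1 and x > 0, with C_x = ln(1+x)/(ln(1+x) − x/(1+x)). Then P(G,x) ≤ (1+x)^{n−δ}. -/
/-- A finset of vertices is independent: no edge inside. -/
def SimpleGraph.IsIndepFinset {V : Type*} (G : SimpleGraph V) (s : Finset V) : Prop :=
  ∀ v ∈ s, ∀ w ∈ s, ¬ G.Adj v w

/-- `indepCount G t` = number of independent sets of size `t` in `G`. -/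
noncomputable def indepCount {V : Type*} [Fintype V] (G : SimpleGraph V) (t : ℕ) : ℕ :=
  Nat.card {s : Finset V // s.card = t ∧ G.IsIndepFinset s}

/-- `indepTotal G` = total number of independent sets in `G` (including ∅). -/
noncomputable def indepTotal {V : Type*} [Fintype V] (G : SimpleGraph V) : ℕ :=
  Nat.card {s : Finset V // G.IsIndepFinset s}

open Classical in
/-- The independence polynomial `P(G,x) = Σ_t i_t(G) xᵗ`. -/
noncomputable def indPoly {V : Type*} [Fintype V] (G : SimpleGraph V) (x : ℝ) : ℝ :=
  ∑ s ∈ Finset.univ.filter (fun s : Finset V => G.IsIndepFinset s), x ^ s.card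

/-!
Fix a maximum independent set `A`, so `#A = n - k` and `#Aᶜ = k`. An independent set `s` is
`C ∪ D` with `C = s \ A` and `D ⊆ A` free of neighbours of `C`; by maximality of `A`, `C` has at
least `#C` neighbours in `A`. Summing over `C ⊆ Aᶜ` gives
`P(G, x) ≤ (1 + x) ^ (n - k) * (1 + x / (1 + x)) ^ k ≤ (1 + x) ^ (n - k) * exp (k x / (1 + x))`,
and the choice of `C_x` makes `exp (k x / (1 + x)) ≤ (1 + x) ^ (k - δ)`.
-/

open Finset Real

theorem Finset.sum_powerset_pow_card {ι R : Type*} [CommSemiring R] (s : Finset ι) (a : R) :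
    ∑ t ∈ s.powerset, a ^ #t = (a + 1) ^ #s := by
  simpa using sum_pow_mul_eq_add_pow a 1 s

namespace SimpleGraph

variable {V : Type*} {G : SimpleGraph V}

theorem IsIndepFinset.subset {s t : Finset V} (ht : G.IsIndepFinset t) (hst : s ⊆ t) :
    G.IsIndepFinset s :=
  fun v hv w hw => ht v (hst hv) w (hst hw)

variable [DecidableEq V] [DecidableRel G.Adj] {A C : Finset V}

/-- Exchange argument: otherwise `(A \ N) ∪ C`, with `N` the neighbours of `C` in `A`,
would be a larger independent set than `A`. -/
theorem card_le_card_filter_adj (hA : G.IsIndepFinset A)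
    (hmax : ∀ s, G.IsIndepFinset s → #s ≤ #A) (hC : G.IsIndepFinset C) (hCA : Disjoint C A) :
    #C ≤ #{a ∈ A | ∃ c ∈ C, G.Adj a c} := by
  set N := {a ∈ A | ∃ c ∈ C, G.Adj a c}
  have hNA : N ⊆ A := filter_subset _ _
  have hind : G.IsIndepFinset (A \ N ∪ C) := by
    intro v hv w hw hvw
    simp only [mem_union, mem_sdiff, N, mem_filter, not_and, not_exists] at hv hw
    rcases hv with ⟨hvA, hvN⟩ | hvC <;> rcases hw with ⟨hwA, hwN⟩ | hwC
    · exact hA v hvA w hwA hvw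
    · exact hvN hvA w hwC hvw
    · exact hwN hwA v hvC hvw.symm
    · exact hC v hvC w hwC hvw
  have hcard := hmax _ hind
  rw [card_union_of_disjoint (hCA.symm.mono_left sdiff_subset), card_sdiff_of_subset hNA] at hcard
  have := card_le_card hNA
  omega

theorem sum_filter_sdiff_eq_le (hA : G.IsIndepFinset A) (hmax : ∀ s, G.IsIndepFinset s → #s ≤ #A)
    {S : Finset (Finset V)} (hS : ∀ s ∈ S, G.IsIndepFinset s) {x : ℝ} (hx : 0 ≤ x) :
    ∑ s ∈ S with s \ A = C, x ^ #s ≤ (1 + x) ^ #A * (x / (1 + x)) ^ #C := by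
  rcases (S.filter (· \ A = C)).eq_empty_or_nonempty with hempty | ⟨s₀, hs₀⟩
  · rw [hempty, sum_empty]
    positivity
  obtain ⟨hs₀S, rfl⟩ := mem_filter.mp hs₀
  have hCA : Disjoint (s₀ \ A) A := sdiff_disjoint
  set N := {a ∈ A | ∃ c ∈ s₀ \ A, G.Adj a c}
  have hNA : N ⊆ A := filter_subset _ _
  have hCN : #(s₀ \ A) ≤ #N :=
    card_le_card_filter_adj hA hmax ((hS s₀ hs₀S).subset sdiff_subset) hCA
  have hNA' := card_le_card hNA
  have hfiber : {s ∈ S | s \ A = s₀ \ A} ⊆ (A \ N).powerset.image (s₀ \ A ∪ ·) := by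
    intro s hs
    obtain ⟨hsS, hsC⟩ := mem_filter.mp hs
    refine mem_image.mpr ⟨s ∩ A, mem_powerset.mpr fun a ha => ?_, ?_⟩
    · rw [mem_inter] at ha
      refine mem_sdiff.mpr ⟨ha.2, fun haN => ?_⟩
      obtain ⟨-, c, hc, hac⟩ := mem_filter.mp haN
      rw [← hsC] at hc
      exact hS s hsS a ha.1 c (mem_sdiff.mp hc).1 hac
    · rw [← hsC, sdiff_union_inter]
  calc ∑ s ∈ S with s \ A = s₀ \ A, x ^ #s
      ≤ ∑ s ∈ (A \ N).powerset.image (s₀ \ A ∪ ·), x ^ #s :=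
        sum_le_sum_of_subset_of_nonneg hfiber fun _ _ _ => by positivity
    _ ≤ ∑ D ∈ (A \ N).powerset, x ^ #(s₀ \ A ∪ D) :=
        sum_image_le_of_nonneg fun _ _ => by positivity
    _ = x ^ #(s₀ \ A) * ∑ D ∈ (A \ N).powerset, x ^ #D := by
        rw [mul_sum]
        refine sum_congr rfl fun D hD => ?_
        rw [card_union_of_disjoint (hCA.mono_right ((mem_powerset.mp hD).trans sdiff_subset)),
          pow_add]
    _ = x ^ #(s₀ \ A) * (1 + x) ^ (#A - #N) := by
        rw [sum_powerset_pow_card, card_sdiff_of_subset hNA, add_comm]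
    _ ≤ x ^ #(s₀ \ A) * (1 + x) ^ (#A - #(s₀ \ A)) := by
        gcongr
        linarith
    _ = (1 + x) ^ #A * (x / (1 + x)) ^ #(s₀ \ A) := by
        rw [div_pow, ← Nat.sub_add_cancel (hCN.trans hNA'), pow_add, Nat.add_sub_cancel]
        field_simp

omit [DecidableRel G.Adj] in
theorem indPoly_le_of_forall_card_le [Fintype V] (hA : G.IsIndepFinset A)
    (hmax : ∀ s, G.IsIndepFinset s → #s ≤ #A) {x : ℝ} (hx : 0 ≤ x) :
    indPoly G x ≤ (1 + x) ^ #A * (1 + x / (1 + x)) ^ #Aᶜ := by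
  classical
  set S := univ.filter (G.IsIndepFinset ·)
  have hmaps : ∀ s ∈ S, s \ A ∈ Aᶜ.powerset :=
    fun s _ => mem_powerset.mpr fun v hv => mem_compl.mpr (mem_sdiff.mp hv).2
  calc indPoly G x = ∑ C ∈ Aᶜ.powerset, ∑ s ∈ S with s \ A = C, x ^ #s :=
        (sum_fiberwise_of_maps_to hmaps _).symm
    _ ≤ ∑ C ∈ Aᶜ.powerset, (1 + x) ^ #A * (x / (1 + x)) ^ #C :=
        sum_le_sum fun C _ => sum_filter_sdiff_eq_le hA hmax (fun s hs => (mem_filter.mp hs).2) hx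
    _ = (1 + x) ^ #A * (1 + x / (1 + x)) ^ #Aᶜ := by
        rw [← mul_sum, sum_powerset_pow_card, add_comm (x / (1 + x))]

end SimpleGraph

theorem Real.div_one_add_lt_log_one_add {x : ℝ} (hx : 0 < x) : x / (1 + x) < log (1 + x) :=
  calc x / (1 + x) < 2 * x / (x + 2) := by
        rw [div_lt_div_iff₀ (by positivity) (by positivity)]
        nlinarith
    _ < log (1 + x) := lt_log_one_add_of_pos hx

section LogConstant

variable {x : ℝ} {k δ : ℕ}

theorem le_of_log_div_mul_le (hx : 0 < x)
    (hk : log (1 + x) / (log (1 + x) - x / (1 + x)) * δ ≤ k) : δ ≤ k := by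
  have hy := div_one_add_lt_log_one_add hx
  have hy0 : 0 < x / (1 + x) := by positivity
  have hC : 1 ≤ log (1 + x) / (log (1 + x) - x / (1 + x)) := by
    rw [le_div_iff₀ (by linarith)]
    linarith
  have : (δ : ℝ) ≤ k := by nlinarith
  exact_mod_cast this

/-- `1 + y ≤ exp y` with `y = x / (1 + x)`, and `hk` is exactly `exp (k y) ≤ (1 + x) ^ (k - δ)`. -/
theorem one_add_div_pow_le_of_log_div_mul_le (hx : 0 < x)
    (hk : log (1 + x) / (log (1 + x) - x / (1 + x)) * δ ≤ k) :
    (1 + x / (1 + x)) ^ k ≤ (1 + x) ^ (k - δ) := by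
  set y := x / (1 + x)
  set L := log (1 + x)
  have hyL : y < L := div_one_add_lt_log_one_add hx
  have hy0 : 0 < y := by positivity
  have hky : k * y ≤ (k - δ : ℕ) * L := by
    rw [Nat.cast_sub (le_of_log_div_mul_le hx hk)]
    rw [div_mul_eq_mul_div, div_le_iff₀ (by linarith)] at hk
    linarith
  calc (1 + y) ^ k ≤ exp y ^ k := by
        gcongr
        exact add_comm y 1 ▸ add_one_le_exp y
    _ = exp (k * y) := (exp_nat_mul y k).symm
    _ ≤ exp ((k - δ : ℕ) * L) := exp_le_exp.mpr hky
    _ = (1 + x) ^ (k - δ) := by rw [exp_nat_mul, exp_log (by linarith)]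

end LogConstant

theorem indPoly_small_indepNum_general {V : Type*} [Fintype V] (G : SimpleGraph V)
    (n k δ : ℕ) (x : ℝ) (hx : 0 < x)
    (hcard : Fintype.card V = n) (hkn : k ≤ n)
    (hα : IsGreatest {m : ℕ | ∃ s : Finset V, s.card = m ∧ G.IsIndepFinset s} (n - k))
    (hk : Real.log (1 + x) / (Real.log (1 + x) - x / (1 + x)) * δ ≤ (k : ℝ)) :
    indPoly G x ≤ (1 + x) ^ (n - δ) := by
  classical
  obtain ⟨⟨A, hAcard, hA⟩, hmax⟩ := hα
  have hAc : #Aᶜ = k := by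
    rw [card_compl, hcard, hAcard]
    omega
  have hδk := le_of_log_div_mul_le hx hk
  calc indPoly G x ≤ (1 + x) ^ #A * (1 + x / (1 + x)) ^ #Aᶜ :=
        G.indPoly_le_of_forall_card_le hA (fun s hs => hAcard ▸ hmax ⟨s, rfl, hs⟩) hx.le
    _ ≤ (1 + x) ^ (n - k) * (1 + x) ^ (k - δ) := by
        rw [hAcard, hAc]
        gcongr
        exact one_add_div_pow_le_of_log_div_mul_le hx hk
    _ = (1 + x) ^ (n - δ) := by
        rw [← pow_add]
        congr 1
        omega

theorem indPoly_small_indepNum {V : Type*} [Fintype V] (G : SimpleGraph V)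
    (n k δ : ℕ) (x : ℝ) (hx : 0 < x) (hδ : 1 ≤ δ)
    (hcard : Fintype.card V = n) (hkn : k ≤ n)
    (hα : IsGreatest {m : ℕ | ∃ s : Finset V, s.card = m ∧ G.IsIndepFinset s} (n - k))
    (hk : Real.log (1 + x) / (Real.log (1 + x) - x / (1 + x)) * δ ≤ (k : ℝ)) :
    indPoly G x ≤ (1 + x) ^ (n - δ) :=
  indPoly_small_indepNum_general G n k δ x hx hcard hkn hα hk
end

section
/- Let G be a bipartite graph with parts E and O of size n each. Let K(G) be the least integer K such that every pair (A,B) with A ⊆ E, B ⊆ O, |A| = |B| = K has an edge between A and B; and for 1 ≤ k ≤ K(G) let m(k,G) be the maximum over k-subsets A of either part of the number of vertices in the other part with no neighbor in A. Then for all t ≥ 0, i_t(G) ≤ 2·( C(n,t) + Σ_{k=1}^{min(K(G), ⌊t/2⌋)} C(n,k)·C(m(k,G), t−k) ). -/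
/-!
Split the independent `t`-sets `s` according to the smaller of `s ∩ A`, `s ∩ B`; by symmetry
it suffices to count those with `k = #(s ∩ A) ≤ t / 2`. Since `s ∩ A` and `s ∩ B` are joined by
no edge and both have at least `k` elements, `k < K`. The set `s` is determined by the `k`-set
`s ∩ A` together with the `(t - k)`-set `s ∩ B`, which must avoid every neighbour of `s ∩ A`;
for `k ≥ 1` this leaves at most `m k` candidates in `B`, and for `k = 0` all of `B`.
-/

open Finset

theorem Finset.two_mul_card_inter_le_or {α : Type*} [DecidableEq α] {A B : Finset α}
    (hdisj : Disjoint A B) (s : Finset α) : 2 * #(s ∩ A) ≤ #s ∨ 2 * #(s ∩ B) ≤ #s := by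
  have hsum : #(s ∩ A) + #(s ∩ B) ≤ #s := by
    rw [← card_union_of_disjoint (hdisj.mono inter_subset_right inter_subset_right)]
    exact card_le_card (union_subset inter_subset_left inter_subset_left)
  omega

namespace SimpleGraph

variable {V : Type*} (G : SimpleGraph V)

instance [DecidableRel G.Adj] : DecidablePred G.IsIndepFinset := fun s =>
  inferInstanceAs (Decidable (∀ v ∈ s, ∀ w ∈ s, ¬ G.Adj v w))

def nonNeighborsIn [DecidableRel G.Adj] (B S : Finset V) : Finset V :=
  {w ∈ B | ∀ a ∈ S, ¬ G.Adj a w}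

variable {G}

@[simp]
theorem mem_nonNeighborsIn [DecidableRel G.Adj] {B S : Finset V} {w : V} :
    w ∈ G.nonNeighborsIn B S ↔ w ∈ B ∧ ∀ a ∈ S, ¬ G.Adj a w :=
  mem_filter

variable [DecidableEq V]

theorem IsIndepFinset.min_card_lt {K : ℕ} {A B : Finset V}
    (hK : ∀ A' ⊆ A, ∀ B' ⊆ B, #A' = K → #B' = K → ∃ a ∈ A', ∃ b ∈ B', G.Adj a b)
    {X Y : Finset V} (hXA : X ⊆ A) (hYB : Y ⊆ B) (hXY : G.IsIndepFinset (X ∪ Y)) :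
    min #X #Y < K := by
  by_contra! hle
  obtain ⟨X', hX'X, hX'⟩ := exists_subset_card_eq (hle.trans (min_le_left _ _))
  obtain ⟨Y', hY'Y, hY'⟩ := exists_subset_card_eq (hle.trans (min_le_right _ _))
  obtain ⟨a, ha, b, hb, hab⟩ := hK X' (hX'X.trans hXA) Y' (hY'Y.trans hYB) hX' hY'
  exact hXY a (mem_union_left _ (hX'X ha)) b (mem_union_right _ (hY'Y hb)) hab

variable [Fintype V] [DecidableRel G.Adj] {A B : Finset V}

theorem card_isIndepFinset_le_add (hdisj : Disjoint A B) (t : ℕ) :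
    #{s : Finset V | #s = t ∧ G.IsIndepFinset s} ≤
      #{s : Finset V | #s = t ∧ G.IsIndepFinset s ∧ 2 * #(s ∩ A) ≤ t} +
        #{s : Finset V | #s = t ∧ G.IsIndepFinset s ∧ 2 * #(s ∩ B) ≤ t} := by
  refine (card_le_card fun s hs => ?_).trans (card_union_le _ _)
  obtain ⟨rfl, hind⟩ := (mem_filter.1 hs).2
  rcases two_mul_card_inter_le_or hdisj s with h | h
  · exact mem_union_left _ (mem_filter.2 ⟨mem_univ s, rfl, hind, h⟩)
  · exact mem_union_right _ (mem_filter.2 ⟨mem_univ s, rfl, hind, h⟩)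

theorem card_isIndepFinset_card_inter_eq_le (hcover : A ∪ B = univ) (t k : ℕ) :
    #{s : Finset V | #s = t ∧ G.IsIndepFinset s ∧ #(s ∩ A) = k} ≤
      ∑ S ∈ A.powersetCard k, (#(G.nonNeighborsIn B S)).choose (t - k) := by
  calc #{s : Finset V | #s = t ∧ G.IsIndepFinset s ∧ #(s ∩ A) = k}
      ≤ #((A.powersetCard k).biUnion fun S =>
          ((G.nonNeighborsIn B S).powersetCard (t - k)).image (S ∪ ·)) := by
        refine card_le_card fun s hs => ?_
        obtain ⟨hst, hind, hk⟩ := (mem_filter.1 hs).2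
        have hsdiff_B : s \ A ⊆ B := sdiff_le_iff.2 (hcover ▸ subset_univ s : s ⊆ A ∪ B)
        refine mem_biUnion.2 ⟨s ∩ A, mem_powersetCard.2 ⟨inter_subset_right, hk⟩,
          mem_image.2 ⟨s \ A, mem_powersetCard.2 ⟨fun w hw => ?_, ?_⟩, sup_inf_sdiff s A⟩⟩
        · exact mem_nonNeighborsIn.2
            ⟨hsdiff_B hw, fun a ha => hind a (mem_inter.1 ha).1 w (mem_sdiff.1 hw).1⟩
        · have := card_inter_add_card_sdiff s A
          omega
    _ ≤ ∑ S ∈ A.powersetCard k,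
          #(((G.nonNeighborsIn B S).powersetCard (t - k)).image (S ∪ ·)) :=
        card_biUnion_le
    _ ≤ ∑ S ∈ A.powersetCard k, (#(G.nonNeighborsIn B S)).choose (t - k) :=
        sum_le_sum fun S _ => card_image_le.trans (card_powersetCard _ _).le

theorem card_isIndepFinset_two_mul_card_inter_le (hcover : A ∪ B = univ) {K : ℕ}
    (hK : ∀ A' ⊆ A, ∀ B' ⊆ B, #A' = K → #B' = K → ∃ a ∈ A', ∃ b ∈ B', G.Adj a b)
    {m : ℕ → ℕ} (hm : ∀ k, 1 ≤ k → k ≤ K → ∀ S ⊆ A, #S = k → #(G.nonNeighborsIn B S) ≤ m k)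
    (t : ℕ) :
    #{s : Finset V | #s = t ∧ G.IsIndepFinset s ∧ 2 * #(s ∩ A) ≤ t} ≤
      (#B).choose t + ∑ k ∈ Icc 1 (min K (t / 2)), (#A).choose k * (m k).choose (t - k) := by
  set M := min K (t / 2)
  set F : Finset (Finset V) := {s | #s = t ∧ G.IsIndepFinset s ∧ 2 * #(s ∩ A) ≤ t}
  have hF_maps : ∀ s ∈ F, #(s ∩ A) ∈ insert 0 (Icc 1 M) := by
    intro s hs
    obtain ⟨hst, hind, ht⟩ := (mem_filter.1 hs).2
    have hsdiff_B : s \ A ⊆ B := sdiff_le_iff.2 (hcover ▸ subset_univ s : s ⊆ A ∪ B)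
    have hlt := IsIndepFinset.min_card_lt hK (X := s ∩ A) inter_subset_right hsdiff_B
      (by rwa [union_comm, sdiff_union_inter])
    have hcard := card_inter_add_card_sdiff s A
    simp only [mem_insert, mem_Icc, M]
    omega
  have hfiber (k : ℕ) : #{s ∈ F | #(s ∩ A) = k} ≤
      ∑ S ∈ A.powersetCard k, (#(G.nonNeighborsIn B S)).choose (t - k) := by
    refine (card_le_card fun s hs => ?_).trans (card_isIndepFinset_card_inter_eq_le hcover t k)
    simp only [F, mem_filter, mem_univ, true_and] at hs ⊢
    exact ⟨hs.1.1, hs.1.2.1, hs.2⟩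
  have hterm : ∀ k ∈ Icc 1 M, ∑ S ∈ A.powersetCard k, (#(G.nonNeighborsIn B S)).choose (t - k)
      ≤ (#A).choose k * (m k).choose (t - k) := by
    intro k hk
    obtain ⟨hk1, hkM⟩ := mem_Icc.1 hk
    calc _ ≤ ∑ S ∈ A.powersetCard k, (m k).choose (t - k) := by
          refine sum_le_sum fun S hS => Nat.choose_le_choose _ ?_
          obtain ⟨hSA, hSk⟩ := mem_powersetCard.1 hS
          exact hm k hk1 (hkM.trans (min_le_left _ _)) S hSA hSk
      _ = _ := by rw [sum_const, card_powersetCard, smul_eq_mul]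
  calc #F = ∑ k ∈ insert 0 (Icc 1 M), #{s ∈ F | #(s ∩ A) = k} :=
        card_eq_sum_card_fiberwise hF_maps
    _ = #{s ∈ F | #(s ∩ A) = 0} + ∑ k ∈ Icc 1 M, #{s ∈ F | #(s ∩ A) = k} :=
        sum_insert (by simp)
    _ ≤ (#B).choose t + ∑ k ∈ Icc 1 M, (#A).choose k * (m k).choose (t - k) := by
        gcongr with k hk
        · simpa [nonNeighborsIn] using hfiber 0
        · exact (hfiber k).trans (hterm k hk)

end SimpleGraph

theorem indepCount_eq_card {V : Type*} [Fintype V] (G : SimpleGraph V) [DecidableRel G.Adj]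
    (t : ℕ) : indepCount G t = #{s : Finset V | #s = t ∧ G.IsIndepFinset s} := by
  rw [indepCount, Nat.card_eq_fintype_card, Fintype.card_subtype]

theorem bipartite_upper_bound_general {V : Type*} [Fintype V] [DecidableEq V]
    (G : SimpleGraph V) [DecidableRel G.Adj] (n : ℕ)
    (A B : Finset V) (hdisj : Disjoint A B) (hunion : A ∪ B = Finset.univ)
    (hA : A.card = n) (hB : B.card = n)
    (K : ℕ)
    (hK : IsLeast {K' : ℕ | ∀ A' ⊆ A, ∀ B' ⊆ B, A'.card = K' → B'.card = K' →
      ∃ a ∈ A', ∃ b ∈ B', G.Adj a b} K)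
    (m : ℕ → ℕ)
    (hm : ∀ k, 1 ≤ k → k ≤ K → IsGreatest {c : ℕ |
      (∃ A' ⊆ A, A'.card = k ∧ c = (B.filter (fun w => ∀ a ∈ A', ¬ G.Adj a w)).card) ∨
      (∃ B' ⊆ B, B'.card = k ∧ c = (A.filter (fun w => ∀ b ∈ B', ¬ G.Adj b w)).card)} (m k))
    (t : ℕ) :
    indepCount G t ≤ 2 * (n.choose t +
      ∑ k ∈ Finset.Icc 1 (min K (t / 2)), n.choose k * (m k).choose (t - k)) := by
  have hK_symm : ∀ B' ⊆ B, ∀ A' ⊆ A, #B' = K → #A' = K → ∃ b ∈ B', ∃ a ∈ A', G.Adj b a := by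
    intro B' hB' A' hA' hB'K hA'K
    obtain ⟨a, ha, b, hb, hab⟩ := hK.1 A' hA' B' hB' hA'K hB'K
    exact ⟨b, hb, a, ha, hab.symm⟩
  have hA_side := SimpleGraph.card_isIndepFinset_two_mul_card_inter_le hunion hK.1
    (fun k hk1 hkK S hS hSk => (hm k hk1 hkK).2 (Or.inl ⟨S, hS, hSk, by congr 1; ext; simp⟩)) t
  have hB_side := SimpleGraph.card_isIndepFinset_two_mul_card_inter_le
    (union_comm B A ▸ hunion) hK_symm
    (fun k hk1 hkK S hS hSk => (hm k hk1 hkK).2 (Or.inr ⟨S, hS, hSk, by congr 1; ext; simp⟩)) t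
  rw [hA, hB] at hA_side hB_side
  rw [indepCount_eq_card, two_mul]
  exact (SimpleGraph.card_isIndepFinset_le_add hdisj t).trans (add_le_add hA_side hB_side)

theorem bipartite_upper_bound {V : Type*} [Fintype V] [DecidableEq V]
    (G : SimpleGraph V) [DecidableRel G.Adj] (n : ℕ)
    (A B : Finset V) (hdisj : Disjoint A B) (hunion : A ∪ B = Finset.univ)
    (hA : A.card = n) (hB : B.card = n)
    (hbip : ∀ v w, G.Adj v w → (v ∈ A ∧ w ∈ B) ∨ (v ∈ B ∧ w ∈ A))
    (K : ℕ)
    (hK : IsLeast {K' : ℕ | ∀ A' ⊆ A, ∀ B' ⊆ B, A'.card = K' → B'.card = K' →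
      ∃ a ∈ A', ∃ b ∈ B', G.Adj a b} K)
    (m : ℕ → ℕ)
    (hm : ∀ k, 1 ≤ k → k ≤ K → IsGreatest {c : ℕ |
      (∃ A' ⊆ A, A'.card = k ∧ c = (B.filter (fun w => ∀ a ∈ A', ¬ G.Adj a w)).card) ∨
      (∃ B' ⊆ B, B'.card = k ∧ c = (A.filter (fun w => ∀ b ∈ B', ¬ G.Adj b w)).card)} (m k))
    (t : ℕ) :
    indepCount G t ≤ 2 * (n.choose t +
      ∑ k ∈ Finset.Icc 1 (min K (t / 2)), n.choose k * (m k).choose (t - k)) :=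
  bipartite_upper_bound_general G n A B hdisj hunion hA hB K hK m hm t
end
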